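/- arXiv:2402.09261 — 2 statements merged into one kernel-verified Lean document; each statement's English description precedes it below -/
import Mathlib

section
/- Let X be a complex Banach space and let T ∈ L(X) be a right semi-Fredholm operator. Then T is a quasi-Fredholm operator. -/
noncomputable section

/-- The two-sided ideal `F₀(X)` of finite-rank operators in `L(X)`. -/
def finiteRankIdeal (X : Type*) [NormedAddCommGroup X] [NormedSpace ℂ X] :
    TwoSidedIdeal (X →L[ℂ] X) :=
  TwoSidedIdeal.mk'
    {F : X →L[ℂ] X | FiniteDimensional ℂ (LinearMap.range (F : X →ₗ[ℂ] X))}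
    (by
      show FiniteDimensional ℂ (LinearMap.range ((0 : X →L[ℂ] X) : X →ₗ[ℂ] X))
      rw [show LinearMap.range ((0 : X →L[ℂ] X) : X →ₗ[ℂ] X) = ⊥ by ext x; simp [eq_comm]]
      infer_instance)
    (by
      intro x y hx hy
      haveI : FiniteDimensional ℂ (LinearMap.range (x : X →ₗ[ℂ] X)) := hx
      haveI : FiniteDimensional ℂ (LinearMap.range (y : X →ₗ[ℂ] X)) := hy
      have hle : LinearMap.range ((x + y : X →L[ℂ] X) : X →ₗ[ℂ] X) ≤ LinearMap.range (x : X →ₗ[ℂ] X) ⊔ LinearMap.range (y : X →ₗ[ℂ] X) := by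
        rintro z ⟨w, rfl⟩
        exact Submodule.add_mem_sup (LinearMap.mem_range_self (x : X →ₗ[ℂ] X) w) (LinearMap.mem_range_self (y : X →ₗ[ℂ] X) w)
      exact Submodule.finiteDimensional_of_le hle)
    (by
      intro x hx
      haveI : FiniteDimensional ℂ (LinearMap.range (x : X →ₗ[ℂ] X)) := hx
      have hle : LinearMap.range ((-x : X →L[ℂ] X) : X →ₗ[ℂ] X) ≤ LinearMap.range (x : X →ₗ[ℂ] X) := by
        rintro z ⟨w, rfl⟩; exact ⟨-w, by simp⟩
      exact Submodule.finiteDimensional_of_le hle)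
    (by
      intro x y hy
      haveI : FiniteDimensional ℂ (LinearMap.range (y : X →ₗ[ℂ] X)) := hy
      haveI : FiniteDimensional ℂ (Submodule.map (x : X →ₗ[ℂ] X) (LinearMap.range (y : X →ₗ[ℂ] X))) :=
        Module.Finite.map _ _
      have hle : LinearMap.range ((x * y : X →L[ℂ] X) : X →ₗ[ℂ] X) ≤ Submodule.map (x : X →ₗ[ℂ] X) (LinearMap.range (y : X →ₗ[ℂ] X)) := by
        rintro z ⟨w, rfl⟩; exact ⟨y w, LinearMap.mem_range_self (y : X →ₗ[ℂ] X) w, rfl⟩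
      exact Submodule.finiteDimensional_of_le hle)
    (by
      intro x y hx
      haveI : FiniteDimensional ℂ (LinearMap.range (x : X →ₗ[ℂ] X)) := hx
      have hle : LinearMap.range ((x * y : X →L[ℂ] X) : X →ₗ[ℂ] X) ≤ LinearMap.range (x : X →ₗ[ℂ] X) := by
        rintro z ⟨w, rfl⟩; exact ⟨y w, rfl⟩
      exact Submodule.finiteDimensional_of_le hle)

/-- Restriction of a bounded operator to an invariant subspace, as a bounded
operator on that subspace. -/
def clmRestrict {X : Type*} [NormedAddCommGroup X] [NormedSpace ℂ X]
    (T : X →L[ℂ] X) (M : Submodule ℂ X) (h : ∀ x ∈ M, T x ∈ M) : M →L[ℂ] M where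
  toLinearMap := (T : X →ₗ[ℂ] X).restrict h
  cont := by
    show Continuous fun x : M => (⟨T x, h x x.2⟩ : M)
    exact Continuous.subtype_mk (T.continuous.comp continuous_subtype_val) _

/-- The set `Δ(T)` of stable iteration indices:
`Δ(T) = {n : ∀ m ≥ n, N(T) ∩ R(T^n) ⊆ N(T) ∩ R(T^m)}`. -/
def disSet {X : Type*} [NormedAddCommGroup X] [NormedSpace ℂ X] (T : X →L[ℂ] X) : Set ℕ :=
  {n | ∀ m, n ≤ m →
    (LinearMap.ker (T : X →ₗ[ℂ] X) ⊓ LinearMap.range ((T ^ n : X →L[ℂ] X) : X →ₗ[ℂ] X) : Submodule ℂ X) ≤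
      LinearMap.ker (T : X →ₗ[ℂ] X) ⊓ LinearMap.range ((T ^ m : X →L[ℂ] X) : X →ₗ[ℂ] X)}

/-- `T` is quasi-Fredholm of degree `d` : `dis(T) = d` (i.e. `d` is the least element of
`Δ(T)`), `N(T) ∩ R(T^d)` is a closed complemented subspace of `X`, and `R(T) + N(T^d)` is a
closed complemented subspace of `X`. -/
def IsQuasiFredholmOfDegree {X : Type*} [NormedAddCommGroup X] [NormedSpace ℂ X]
    (T : X →L[ℂ] X) (d : ℕ) : Prop :=
  IsLeast (disSet T) d ∧
    IsClosed ((LinearMap.ker (T : X →ₗ[ℂ] X) ⊓ LinearMap.range ((T ^ d : X →L[ℂ] X) : X →ₗ[ℂ] X) : Submodule ℂ X) : Set X) ∧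
    (LinearMap.ker (T : X →ₗ[ℂ] X) ⊓ LinearMap.range ((T ^ d : X →L[ℂ] X) : X →ₗ[ℂ] X)).ClosedComplemented ∧
    IsClosed ((LinearMap.range (T : X →ₗ[ℂ] X) ⊔ LinearMap.ker ((T ^ d : X →L[ℂ] X) : X →ₗ[ℂ] X) : Submodule ℂ X) : Set X) ∧
    (LinearMap.range (T : X →ₗ[ℂ] X) ⊔ LinearMap.ker ((T ^ d : X →L[ℂ] X) : X →ₗ[ℂ] X)).ClosedComplemented

/-- `T` is quasi-Fredholm if it is quasi-Fredholm of some degree `d`. -/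
def IsQuasiFredholm {X : Type*} [NormedAddCommGroup X] [NormedSpace ℂ X]
    (T : X →L[ℂ] X) : Prop :=
  ∃ d : ℕ, IsQuasiFredholmOfDegree T d

/-- Left semi-Fredholm: closed range, finite-dimensional kernel, and range complemented
(i.e. the range of a bounded projection). -/
def IsLeftSemiFredholm {Y : Type*} [NormedAddCommGroup Y] [NormedSpace ℂ Y]
    (S : Y →L[ℂ] Y) : Prop :=
  IsClosed ((LinearMap.range (S : Y →ₗ[ℂ] Y) : Submodule ℂ Y) : Set Y) ∧
    FiniteDimensional ℂ (LinearMap.ker (S : Y →ₗ[ℂ] Y)) ∧ (LinearMap.range (S : Y →ₗ[ℂ] Y)).ClosedComplemented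

/-- Right semi-Fredholm: closed range of finite codimension, and kernel complemented
(i.e. the range of a bounded projection). -/
def IsRightSemiFredholm {Y : Type*} [NormedAddCommGroup Y] [NormedSpace ℂ Y]
    (S : Y →L[ℂ] Y) : Prop :=
  IsClosed ((LinearMap.range (S : Y →ₗ[ℂ] Y) : Submodule ℂ Y) : Set Y) ∧
    FiniteDimensional ℂ (Y ⧸ LinearMap.range (S : Y →ₗ[ℂ] Y)) ∧ (LinearMap.ker (S : Y →ₗ[ℂ] Y)).ClosedComplemented

/-- Fredholm: closed range, finite-dimensional kernel, range of finite codimension. -/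
def IsFredholmOp {Y : Type*} [NormedAddCommGroup Y] [NormedSpace ℂ Y]
    (S : Y →L[ℂ] Y) : Prop :=
  IsClosed ((LinearMap.range (S : Y →ₗ[ℂ] Y) : Submodule ℂ Y) : Set Y) ∧
    FiniteDimensional ℂ (LinearMap.ker (S : Y →ₗ[ℂ] Y)) ∧ FiniteDimensional ℂ (Y ⧸ LinearMap.range (S : Y →ₗ[ℂ] Y))

/-- Regular operator: kernel and range are complemented (closed) subspaces. -/
def IsRegularOp {Y : Type*} [NormedAddCommGroup Y] [NormedSpace ℂ Y]
    (S : Y →L[ℂ] Y) : Prop :=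
  (LinearMap.ker (S : Y →ₗ[ℂ] Y)).ClosedComplemented ∧ (LinearMap.range (S : Y →ₗ[ℂ] Y)).ClosedComplemented

lemma range_pow_invariant {X : Type*} [NormedAddCommGroup X] [NormedSpace ℂ X]
    (T : X →L[ℂ] X) (n : ℕ) :
    ∀ x ∈ LinearMap.range ((T ^ n : X →L[ℂ] X) : X →ₗ[ℂ] X), T x ∈ LinearMap.range ((T ^ n : X →L[ℂ] X) : X →ₗ[ℂ] X) := by
  rintro x ⟨y, rfl⟩
  exact ⟨T y, by
    show (T ^ n) (T y) = T ((T ^ n) y)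
    rw [← ContinuousLinearMap.mul_apply, ← ContinuousLinearMap.mul_apply, ← pow_succ,
      ← pow_succ']⟩

/-- B-Fredholm: for some `n`, `R(T^n)` is closed and the restriction of `T` to `R(T^n)`,
viewed as an operator from `R(T^n)` to `R(T^n)`, is a Fredholm operator. -/
def IsBFredholm {X : Type*} [NormedAddCommGroup X] [NormedSpace ℂ X]
    (T : X →L[ℂ] X) : Prop :=
  ∃ n : ℕ, IsClosed ((LinearMap.range ((T ^ n : X →L[ℂ] X) : X →ₗ[ℂ] X) : Submodule ℂ X) : Set X) ∧
    IsFredholmOp (clmRestrict T (LinearMap.range ((T ^ n : X →L[ℂ] X) : X →ₗ[ℂ] X)) (range_pow_invariant T n))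

/-- Left Drazin invertible element of a unital ring: there is an idempotent `p`
commuting with `a` such that `a * p` is nilpotent and `a + p` has a left inverse
commuting with `p`. -/
def IsLeftDrazinInvertible {A : Type*} [Ring A] (a : A) : Prop :=
  ∃ p : A, IsIdempotentElem p ∧ a * p = p * a ∧ IsNilpotent (a * p) ∧
    ∃ b : A, b * (a + p) = 1 ∧ b * p = p * b

/-- Right Drazin invertible element of a unital ring: there is an idempotent `p`
commuting with `a` such that `a * p` is nilpotent and `a + p` has a right inverse
commuting with `p`. -/
def IsRightDrazinInvertible {A : Type*} [Ring A] (a : A) : Prop :=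
  ∃ p : A, IsIdempotentElem p ∧ a * p = p * a ∧ IsNilpotent (a * p) ∧
    ∃ b : A, (a + p) * b = 1 ∧ b * p = p * b

/-- Drazin invertible element of a unital ring: there is an idempotent `p`
commuting with `a` such that `a * p` is nilpotent and `a + p` is invertible. -/
def IsDrazinInvertible {A : Type*} [Ring A] (a : A) : Prop :=
  ∃ p : A, IsIdempotentElem p ∧ a * p = p * a ∧ IsNilpotent (a * p) ∧ IsUnit (a + p)

end

/-!
Because `R(T)` has finite codimension, so has every `R(Tⁿ)`, and since `T` is open onto its
closed range, it maps closed subspaces of finite codimension to closed subspaces; inductively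
every `R(Tⁿ)` is closed. The subspaces `R(T) + N(Tⁿ)` increase and contain `R(T)`, so they
stabilise, and once `N(Tⁿ⁺¹) ⊆ R(T) + N(Tⁿ)`, every `Tⁿy ∈ N(T)` already lies in `R(Tⁿ⁺¹)`:
this gives `dis(T) < ∞`. Then `N(T) ∩ R(Tᵈ)` is closed of finite codimension in the
complemented subspace `N(T)`, and `R(T) + N(Tᵈ)` contains the closed finite-codimensional `R(T)`,
so both are closed and complemented.
-/

open Submodule LinearMap Topology

namespace Module.End

section Ring

variable {R M : Type*} [Ring R] [AddCommGroup M] [Module R M] (f : Module.End R M)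

theorem ker_inf_range_pow_le_range_pow_succ {n : ℕ}
    (h : ker (f ^ (n + 1)) ≤ range f ⊔ ker (f ^ n)) :
    ker f ⊓ range (f ^ n) ≤ range (f ^ (n + 1)) := by
  rintro _ ⟨hx, y, rfl⟩
  have hy : y ∈ ker (f ^ (n + 1)) := by
    rwa [mem_ker, pow_succ', Module.End.mul_apply]
  obtain ⟨_, ⟨z, rfl⟩, w, hw, rfl⟩ := mem_sup.mp (h hy)
  refine ⟨z, ?_⟩
  rw [map_add, mem_ker.mp hw, add_zero, pow_succ, Module.End.mul_apply]

theorem exists_forall_ker_inf_range_pow_le_range_pow_succ [IsNoetherian R (M ⧸ range f)] :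
    ∃ n, ∀ m, n ≤ m → ker f ⊓ range (f ^ m) ≤ range (f ^ (m + 1)) := by
  let chain : ℕ →o Submodule R (M ⧸ range f) :=
    ⟨fun n ↦ (ker (f ^ n)).map (range f).mkQ, fun _ _ h ↦ map_mono (f.iterateKer.monotone h)⟩
  obtain ⟨n, hn⟩ := monotone_stabilizes_iff_noetherian.mpr inferInstance chain
  refine ⟨n, fun m hm ↦ f.ker_inf_range_pow_le_range_pow_succ ?_⟩
  have hstable : chain (m + 1) = chain m := (hn (m + 1) (by omega)).symm.trans (hn m hm)
  calc ker (f ^ (m + 1)) ≤ range f ⊔ ker (f ^ (m + 1)) := le_sup_right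
    _ = range f ⊔ ker (f ^ m) := by
      rw [← comap_map_mkQ, ← comap_map_mkQ]
      exact congrArg (comap (range f).mkQ) hstable

theorem ker_inf_range_pow_le_ker_inf_range_pow {n : ℕ}
    (h : ∀ m, n ≤ m → ker f ⊓ range (f ^ m) ≤ range (f ^ (m + 1))) {m : ℕ} (hm : n ≤ m) :
    ker f ⊓ range (f ^ n) ≤ ker f ⊓ range (f ^ m) := by
  induction m, hm using Nat.le_induction with
  | base => exact le_rfl
  | succ k hk ih => exact le_inf inf_le_left (ih.trans (h k hk))

theorem exists_forall_ker_inf_range_pow_le [IsNoetherian R (M ⧸ range f)] :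
    ∃ n, ∀ m, n ≤ m → ker f ⊓ range (f ^ n) ≤ ker f ⊓ range (f ^ m) :=
  let ⟨n, hn⟩ := f.exists_forall_ker_inf_range_pow_le_range_pow_succ
  ⟨n, fun _ ↦ f.ker_inf_range_pow_le_ker_inf_range_pow hn⟩

end Ring

theorem cofg_range_pow {K V : Type*} [DivisionRing K] [AddCommGroup V] [Module K V]
    (f : Module.End K V) (hf : (range f).CoFG) (n : ℕ) : (range (f ^ n)).CoFG := by
  obtain ⟨F, hF⟩ := (range f).exists_isCompl
  have hFfg : F.FG := hf.fg_of_isCompl hF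
  suffices ∃ G : Submodule K V, G.FG ∧ Codisjoint G (range (f ^ n)) from
    let ⟨_, hG, hcod⟩ := this; hG.cofg_of_codisjoint hcod
  induction n with
  | zero =>
    refine ⟨⊥, fg_bot, ?_⟩
    rw [pow_zero, Module.End.one_eq_id, range_id]
    exact codisjoint_top_right
  | succ n ih =>
    obtain ⟨G, hG, hcod⟩ := ih
    have hsplit : range (f ^ n) = F.map (f ^ n) ⊔ range (f ^ (n + 1)) := by
      rw [pow_succ, Module.End.mul_eq_comp, range_comp, ← Submodule.map_sup, hF.symm.sup_eq_top,
        Submodule.map_top]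
    refine ⟨G ⊔ F.map (f ^ n), hG.sup (hFfg.map _), ?_⟩
    rw [codisjoint_iff, sup_assoc, ← hsplit, hcod.eq_top]

end Module.End

namespace Submodule

theorem CoFG.comap {R M N : Type*} [Ring R] [IsNoetherianRing R] [AddCommGroup M] [Module R M]
    [AddCommGroup N] [Module R N] {q : Submodule R N} (hq : q.CoFG) (f : M →ₗ[R] N) :
    (q.comap f).CoFG := by
  rw [← ker_mkQ q, ← ker_comp]
  exact CoFG.ker _

section Topological

variable {R M : Type*} [Ring R] [AddCommGroup M] [Module R M] [TopologicalSpace M]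

theorem ClosedComplemented.map_subtype {p : Submodule R M} (hp : p.ClosedComplemented)
    {r : Submodule R p} (hr : r.ClosedComplemented) : (r.map p.subtype).ClosedComplemented := by
  obtain ⟨P, hP⟩ := hp
  obtain ⟨Q, hQ⟩ := hr
  refine ⟨(p.subtypeL.comp (r.subtypeL.comp (Q.comp P))).codRestrict _
    fun x ↦ mem_map_of_mem (Q (P x)).2, ?_⟩
  rintro ⟨_, y, hy, rfl⟩
  ext
  show ((Q (P y) : p) : M) = y
  rw [hP y, hQ ⟨y, hy⟩]

end Topological

section FiniteCodimension

variable {𝕜 E : Type*} [NontriviallyNormedField 𝕜] [CompleteSpace 𝕜] [AddCommGroup E] [Module 𝕜 E]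
  [TopologicalSpace E] [IsTopologicalAddGroup E] [ContinuousSMul 𝕜 E]

theorem ClosedComplemented.inf_of_cofg {p q : Submodule 𝕜 E} (hp : p.ClosedComplemented)
    (hpq : IsClosed ((p ⊓ q : Submodule 𝕜 E) : Set E)) (hq : q.CoFG) :
    (p ⊓ q).ClosedComplemented := by
  have : (q.comap p.subtype).CoFG := hq.comap p.subtype
  have hclosed : IsClosed ((q.comap p.subtype : Submodule 𝕜 p) : Set p) := by
    have := hpq.preimage (continuous_subtype_val : Continuous ((↑) : p → E))
    rwa [coe_inf, Set.preimage_inter, Subtype.coe_preimage_self, Set.univ_inter] at this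
  rw [← map_comap_subtype]
  exact hp.map_subtype (.of_finiteDimensional_quotient hclosed)

end FiniteCodimension

end Submodule

namespace ContinuousLinearMap

variable {𝕜 E F : Type*} [NontriviallyNormedField 𝕜] [NormedAddCommGroup E] [NormedSpace 𝕜 E]
  [CompleteSpace E] [NormedAddCommGroup F] [NormedSpace 𝕜 F] [CompleteSpace F]

theorem isStrictMap_of_isClosed_range (u : E →L[𝕜] F) (hu : IsClosed (u.range : Set F)) :
    IsStrictMap u := by
  have : CompleteSpace u.range := hu.completeSpace_coe
  have hsurj : Function.Surjective u.rangeRestrict := (u : E →ₗ[𝕜] F).surjective_rangeRestrict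
  exact LinearMap.isStrictMap_iff_isOpenQuotientMap_rangeRestrict.mpr
    ⟨hsurj, u.rangeRestrict.continuous, u.rangeRestrict.isOpenMap hsurj⟩

theorem isClosed_map_of_isClosed_range [CompleteSpace 𝕜] (u : E →L[𝕜] F)
    (hu : IsClosed (u.range : Set F)) {A : Submodule 𝕜 E} (hA : IsClosed (A : Set E)) [A.CoFG] :
    IsClosed (A.map (u : E →ₗ[𝕜] F) : Set F) := by
  have h := (u.isStrictMap_isClosed_range_iff_restrict A hA).mp
    ⟨u.isStrictMap_of_isClosed_range hu, hu⟩
  rw [← range_domRestrict]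
  exact h.2

theorem isClosed_range_pow [CompleteSpace 𝕜] (T : E →L[𝕜] E) (hT : IsClosed (T.range : Set E))
    (hcofg : T.range.CoFG) (n : ℕ) : IsClosed ((T ^ n).range : Set E) := by
  rw [toLinearMap_pow]
  induction n with
  | zero => simp [Module.End.one_eq_id]
  | succ n ih =>
    have := Module.End.cofg_range_pow _ hcofg n
    rw [pow_succ', Module.End.mul_eq_comp, range_comp]
    exact T.isClosed_map_of_isClosed_range hT ih

end ContinuousLinearMap

/-- Every right semi-Fredholm operator is quasi-Fredholm. -/
theorem rightSemiFredholm_isQuasiFredholm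
    (X : Type*) [NormedAddCommGroup X] [NormedSpace ℂ X] [CompleteSpace X]
    (T : X →L[ℂ] X) (hT : IsRightSemiFredholm T) :
    IsQuasiFredholm T := by
  obtain ⟨hclosed, hcofg, hker⟩ := hT
  have hcofg_pow (n : ℕ) : (range ((T ^ n : X →L[ℂ] X) : X →ₗ[ℂ] X)).CoFG := by
    rw [ContinuousLinearMap.toLinearMap_pow]
    exact Module.End.cofg_range_pow _ hcofg n
  have hnonempty : (disSet T).Nonempty := by
    obtain ⟨n, hn⟩ := Module.End.exists_forall_ker_inf_range_pow_le (T : X →ₗ[ℂ] X)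
    exact ⟨n, fun m hm ↦ by simpa only [ContinuousLinearMap.toLinearMap_pow] using hn m hm⟩
  set d := sInf (disSet T)
  have hclosed_inf : IsClosed ((ker (T : X →ₗ[ℂ] X) ⊓ range ((T ^ d : X →L[ℂ] X) : X →ₗ[ℂ] X) :
      Submodule ℂ X) : Set X) :=
    T.isClosed_ker.inter (T.isClosed_range_pow hclosed hcofg d)
  have hclosed_sup : IsClosed ((range (T : X →ₗ[ℂ] X) ⊔ ker ((T ^ d : X →L[ℂ] X) : X →ₗ[ℂ] X) :
      Submodule ℂ X) : Set X) :=
    isClosed_mono_of_finiteDimensional_quotient hclosed le_sup_left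
  have : (range (T : X →ₗ[ℂ] X) ⊔ ker ((T ^ d : X →L[ℂ] X) : X →ₗ[ℂ] X)).CoFG :=
    CoFG.of_le le_sup_left hcofg
  exact ⟨d, ⟨Nat.sInf_mem hnonempty, fun _ ↦ Nat.sInf_le⟩, hclosed_inf,
    hker.inf_of_cofg hclosed_inf (hcofg_pow d), hclosed_sup,
    .of_finiteDimensional_quotient hclosed_sup⟩
end

section
/- Let X be a complex Banach space and let T ∈ L(X). Then T is a B-Fredholm operator if and only if π(T) is both left Drazin invertible and right Drazin invertible in the algebra C₀(X) = L(X)/F₀(X). -/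
section DrazinInverse

variable {A : Type*} [Ring A] {a b p u v : A} {k m : ℕ}

theorem mul_pow_succ_eq_pow_of_le (h : u * a ^ (k + 1) = a ^ k) (hkm : k ≤ m) :
    u * a ^ (m + 1) = a ^ m := by
  obtain ⟨d, rfl⟩ := Nat.exists_eq_add_of_le hkm
  rw [Nat.add_right_comm, pow_add, ← mul_assoc, h, ← pow_add]

theorem pow_succ_mul_eq_pow_of_le (h : a ^ (k + 1) * v = a ^ k) (hkm : k ≤ m) :
    a ^ (m + 1) * v = a ^ m := by
  obtain ⟨d, rfl⟩ := Nat.exists_eq_add_of_le hkm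
  rw [show k + d + 1 = d + (k + 1) by omega, pow_add, mul_assoc, h, ← pow_add, add_comm]

theorem pow_mul_pow_add_eq_pow (h : u * a ^ (k + 1) = a ^ k) (j : ℕ) :
    u ^ j * a ^ (k + j) = a ^ k := by
  induction j with
  | zero => simp
  | succ j ih =>
    rw [pow_succ, mul_assoc, ← add_assoc, mul_pow_succ_eq_pow_of_le h (Nat.le_add_right k j), ih]

theorem pow_add_mul_pow_eq_pow (h : a ^ (k + 1) * v = a ^ k) (j : ℕ) :
    a ^ (k + j) * v ^ j = a ^ k := by
  induction j with
  | zero => simp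
  | succ j ih =>
    rw [pow_succ', ← mul_assoc, ← add_assoc,
      pow_succ_mul_eq_pow_of_le h (Nat.le_add_right k j), ih]

structure IsDrazinInverse (a b : A) (k : ℕ) : Prop where
  commute : Commute a b
  mul_mul_self : b * a * b = b
  pow_succ_mul : a ^ (k + 1) * b = a ^ k

/-- Drazin's theorem; the inverse is `a ^ k * v ^ (k + 1)`, which also equals
`u ^ (k + 1) * a ^ k`. -/
theorem exists_isDrazinInverse (hu : u * a ^ (k + 1) = a ^ k) (hv : a ^ (k + 1) * v = a ^ k) :
    ∃ b, IsDrazinInverse a b k := by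
  have hb : a ^ k * v ^ (k + 1) = u ^ (k + 1) * a ^ k := by
    conv_lhs => rw [← pow_mul_pow_add_eq_pow hu (k + 1), mul_assoc, pow_add_mul_pow_eq_pow hv]
  have hab : a * (a ^ k * v ^ (k + 1)) = a ^ k * v ^ k := by
    rw [← mul_assoc, ← pow_succ', pow_succ' v, ← mul_assoc, hv]
  have hba : a ^ k * v ^ (k + 1) * a = u ^ k * a ^ k := by
    rw [hb, mul_assoc, ← pow_succ, pow_succ u, mul_assoc, hu]
  refine ⟨a ^ k * v ^ (k + 1), ⟨?_, ?_, ?_⟩⟩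
  · rw [Commute, SemiconjBy, hab, hba]
    conv_lhs => rw [← pow_mul_pow_add_eq_pow hu k, mul_assoc, pow_add_mul_pow_eq_pow hv]
  · rw [mul_assoc, hab, hb, mul_assoc, ← mul_assoc (a ^ k), ← pow_add,
      pow_add_mul_pow_eq_pow hv]
  · rw [← mul_assoc, ← pow_add, add_comm]
    exact pow_add_mul_pow_eq_pow hv (k + 1)

namespace IsDrazinInverse

theorem mul_pow_succ (h : IsDrazinInverse a b k) : b * a ^ (k + 1) = a ^ k := by
  rw [← (h.commute.pow_left (k + 1)).eq, h.pow_succ_mul]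

theorem pow_mul_pow_mul_pow (h : IsDrazinInverse a b k) (hkm : k ≤ m) :
    a ^ m * b ^ m * a ^ m = a ^ m := by
  rw [mul_assoc, ← (h.commute.pow_pow m m).eq, ← mul_assoc, ← pow_add,
    pow_add_mul_pow_eq_pow (pow_succ_mul_eq_pow_of_le h.pow_succ_mul hkm)]

/-- The spectral idempotent is `p = 1 - a * b`; then `(a + p) * (b + p) = 1 + a * p` with `a * p`
nilpotent. -/
theorem isDrazinInvertible (h : IsDrazinInverse a b k) : IsDrazinInvertible a := by
  have hab : IsIdempotentElem (a * b) := by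
    rw [IsIdempotentElem, mul_assoc, ← mul_assoc b a b, h.mul_mul_self]
  set p := 1 - a * b
  have hap : Commute a p := (Commute.one_right a).sub_right ((Commute.refl a).mul_right h.commute)
  have hbp : Commute b p :=
    (Commute.one_right b).sub_right (h.commute.symm.mul_right (Commute.refl b))
  have hpb : p * b = 0 := by
    rw [sub_mul, one_mul, h.commute.eq, h.mul_mul_self, sub_self]
  have hnil : (a * p) ^ (k + 1) = 0 := by
    rw [hap.mul_pow, hab.one_sub.pow_succ_eq, mul_sub, mul_one, ← mul_assoc, ← pow_succ,
      pow_succ_mul_eq_pow_of_le h.pow_succ_mul k.le_succ, sub_self]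
  have hprod : (a + p) * (b + p) = 1 + a * p := by
    rw [add_mul, mul_add, mul_add, hpb, hab.one_sub.eq]
    simp only [p]
    noncomm_ring
  have hcomm : Commute (a + p) (b + p) :=
    (h.commute.add_right hap).add_left (hbp.symm.add_right (Commute.refl p))
  refine ⟨p, hab.one_sub, hap.eq, ⟨k + 1, hnil⟩, ?_⟩
  exact (hcomm.isUnit_mul_iff.mp (hprod ▸ IsNilpotent.isUnit_one_add ⟨k + 1, hnil⟩)).1

end IsDrazinInverse

theorem IsDrazinInvertible.isLeftDrazinInvertible (h : IsDrazinInvertible a) :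
    IsLeftDrazinInvertible a := by
  obtain ⟨p, hp, hap, hnil, w, hw⟩ := h
  have hpw : Commute p w := hw ▸ (Commute.symm hap).add_right (Commute.refl p)
  exact ⟨p, hp, hap, hnil, ↑w⁻¹, by rw [← hw, w.inv_mul], hpw.units_inv_right.eq.symm⟩

theorem IsDrazinInvertible.isRightDrazinInvertible (h : IsDrazinInvertible a) :
    IsRightDrazinInvertible a := by
  obtain ⟨p, hp, hap, hnil, w, hw⟩ := h
  have hpw : Commute p w := hw ▸ (Commute.symm hap).add_right (Commute.refl p)
  exact ⟨p, hp, hap, hnil, ↑w⁻¹, by rw [← hw, w.mul_inv], hpw.units_inv_right.eq.symm⟩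

theorem exists_pow_mul_eq_zero_of_isNilpotent_mul (hp : IsIdempotentElem p) (hap : Commute a p)
    (hnil : IsNilpotent (a * p)) : ∃ m, a ^ m * p = 0 := by
  obtain ⟨m, hm⟩ := hnil
  refine ⟨m + 1, ?_⟩
  rw [← hp.pow_succ_eq m, ← hap.mul_pow, pow_succ, hm, zero_mul]

theorem IsLeftDrazinInvertible.exists_mul_pow_succ_eq_pow (h : IsLeftDrazinInvertible a) :
    ∃ k u, u * a ^ (k + 1) = a ^ k := by
  obtain ⟨p, hp, hap, hnil, b, hb, -⟩ := h
  obtain ⟨m, hm⟩ := exists_pow_mul_eq_zero_of_isNilpotent_mul hp hap hnil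
  refine ⟨m, b, ?_⟩
  calc b * a ^ (m + 1) = b * ((a + p) * a ^ m) := by
        rw [add_mul, ← pow_succ', ← (Commute.pow_left hap m).eq, hm, add_zero]
    _ = a ^ m := by rw [← mul_assoc, hb, one_mul]

theorem IsRightDrazinInvertible.exists_pow_succ_mul_eq_pow (h : IsRightDrazinInvertible a) :
    ∃ k v, a ^ (k + 1) * v = a ^ k := by
  obtain ⟨p, hp, hap, hnil, c, hc, -⟩ := h
  obtain ⟨m, hm⟩ := exists_pow_mul_eq_zero_of_isNilpotent_mul hp hap hnil
  refine ⟨m, c, ?_⟩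
  calc a ^ (m + 1) * c = a ^ m * (a + p) * c := by rw [mul_add, ← pow_succ, hm, add_zero]
    _ = a ^ m := by rw [mul_assoc, hc, mul_one]

theorem isLeftDrazinInvertible_and_isRightDrazinInvertible_iff :
    IsLeftDrazinInvertible a ∧ IsRightDrazinInvertible a ↔ ∃ b k, IsDrazinInverse a b k := by
  constructor
  · rintro ⟨hl, hr⟩
    obtain ⟨k₁, u, hu⟩ := hl.exists_mul_pow_succ_eq_pow
    obtain ⟨k₂, v, hv⟩ := hr.exists_pow_succ_mul_eq_pow
    obtain ⟨b, hb⟩ := exists_isDrazinInverse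
      (mul_pow_succ_eq_pow_of_le hu (le_max_left k₁ k₂))
      (pow_succ_mul_eq_pow_of_le hv (le_max_right k₁ k₂))
    exact ⟨b, _, hb⟩
  · rintro ⟨b, k, hb⟩
    exact ⟨hb.isDrazinInvertible.isLeftDrazinInvertible,
      hb.isDrazinInvertible.isRightDrazinInvertible⟩

end DrazinInverse

section BoundedOperators

variable {𝕜 E : Type*} [NontriviallyNormedField 𝕜] [NormedAddCommGroup E] [NormedSpace 𝕜 E]

/-- `A` maps the finite-codimensional subspace `ker (A * B * A - A)` onto the closed subspace
`ker (A * B - 1)`. -/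
theorem isClosed_range_of_finiteDimensional_range_mul_mul_sub [CompleteSpace 𝕜]
    (A B : E →L[𝕜] E) [FiniteDimensional 𝕜 (A * B * A - A).range] :
    IsClosed (A.range : Set E) := by
  have : (A * B * A - A).ker.CoFG := Submodule.range_fg_iff_ker_cofg.mp
    ((Submodule.fg_iff_finiteDimensional _).mpr inferInstance)
  have hmap : (A * B * A - A).ker.map (A : E →ₗ[𝕜] E) = (A * B - 1).ker := by
    ext y
    constructor
    · rintro ⟨x, hx, rfl⟩
      exact hx
    · intro (hy : A (B y) - y = 0)
      refine ⟨B y, ?_, sub_eq_zero.mp hy⟩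
      show A (B (A (B y))) - A (B y) = 0
      rwa [sub_eq_zero.mp hy]
  exact LinearMap.isClosed_range_of_isClosed_map_of_finiteDimensional_quotient
    (hmap ▸ (A * B - 1).isClosed_ker)

theorem finiteDimensional_ker_inf_range_pow (T C : E →L[𝕜] E) (n : ℕ)
    [FiniteDimensional 𝕜 (C * T ^ (n + 1) - T ^ n).range] :
    FiniteDimensional 𝕜 ↥(T.ker ⊓ (T ^ n).range) := by
  refine Submodule.finiteDimensional_of_le (S₂ := (C * T ^ (n + 1) - T ^ n).range) fun x hx ↦ ?_
  obtain ⟨hx : T x = 0, y, hy : (T ^ n) y = x⟩ := hx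
  refine ⟨-y, ?_⟩
  show C ((T ^ (n + 1)) (-y)) - (T ^ n) (-y) = x
  rw [pow_succ', mul_apply_eq_comp, map_neg, map_neg, hy, hx, map_neg, map_zero, neg_zero,
    zero_sub, neg_neg]

theorem range_pow_le_range_pow_succ_sup (T D : E →L[𝕜] E) (n : ℕ) :
    (T ^ n).range ≤ (T ^ (n + 1)).range ⊔ (T ^ (n + 1) * D - T ^ n).range := by
  rintro _ ⟨y, rfl⟩
  have : (T ^ n) y = (T ^ (n + 1)) (D y) - (T ^ (n + 1) * D - T ^ n) y := by simp
  show (T ^ n) y ∈ _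
  rw [this]
  exact Submodule.sub_mem_sup (LinearMap.mem_range_self _ _) (LinearMap.mem_range_self _ _)

theorem ContinuousLinearMap.isStrictMap_of_isClosed_range_s8 {F : Type*} [CompleteSpace E]
    [NormedAddCommGroup F] [NormedSpace 𝕜 F] [CompleteSpace F]
    (f : E →L[𝕜] F) (hf : IsClosed (f.range : Set F)) : Topology.IsStrictMap f := by
  have : CompleteSpace f.range := hf.completeSpace_coe
  rw [Topology.isStrictMap_iff_isQuotientMap_rangeFactorization, ← coe_rangeRestrict]
  exact (IsOpenQuotientMap.mk f.surjective_rangeRestrict f.rangeRestrict.continuous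
    (f.rangeRestrict.isOpenMap f.surjective_rangeRestrict)).isQuotientMap

theorem finiteDimensional_range_comp_comp {E₁ E₂ E₃ : Type*}
    [NormedAddCommGroup E₁] [NormedSpace 𝕜 E₁]
    [NormedAddCommGroup E₂] [NormedSpace 𝕜 E₂]
    [NormedAddCommGroup E₃] [NormedSpace 𝕜 E₃]
    (g : E₂ →L[𝕜] E₃) (f : E₁ →L[𝕜] E₂) (h : E →L[𝕜] E₁)
    [FiniteDimensional 𝕜 f.range] :
    FiniteDimensional 𝕜 (g ∘L f ∘L h).range := by
  refine Submodule.finiteDimensional_of_le (S₂ := f.range.map (g : E₂ →ₗ[𝕜] E₃)) ?_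
  rw [ContinuousLinearMap.toLinearMap_comp, LinearMap.range_comp]
  exact Submodule.map_mono (LinearMap.range_comp_le_range _ _)

end BoundedOperators

section Subtype

variable {K V : Type*} [DivisionRing K] [AddCommGroup V] [Module K V] {M N W : Submodule K V}

theorem Submodule.finiteDimensional_comap_subtype [FiniteDimensional K ↥(M ⊓ N)] :
    FiniteDimensional K (N.comap M.subtype) := by
  have : FiniteDimensional K ((N.comap M.subtype).map M.subtype) := by
    rwa [Submodule.map_comap_subtype]
  exact (Submodule.equivMapOfInjective _ M.injective_subtype _).symm.finiteDimensional

theorem Submodule.finiteDimensional_quotient_comap_subtype [FiniteDimensional K W]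
    (h : M ≤ N ⊔ W) : FiniteDimensional K (M ⧸ N.comap M.subtype) := by
  have hker : N.comap M.subtype = (N.mkQ ∘ₗ M.subtype).ker := by
    rw [LinearMap.ker_comp, Submodule.ker_mkQ]
  have hrange : (N.mkQ ∘ₗ M.subtype).range ≤ W.map N.mkQ := by
    rintro _ ⟨⟨m, hm⟩, rfl⟩
    obtain ⟨y, hy, w, hw, rfl⟩ := Submodule.mem_sup.mp (h hm)
    exact ⟨w, hw, by simp [hy]⟩
  have := Submodule.finiteDimensional_of_le hrange
  rw [hker]
  exact (N.mkQ ∘ₗ M.subtype).quotKerEquivRange.symm.finiteDimensional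

end Subtype

section Restriction

variable {X : Type*} [NormedAddCommGroup X] [NormedSpace ℂ X] (T : X →L[ℂ] X)

theorem coe_clmRestrict_pow_apply {M : Submodule ℂ X} (h : ∀ x ∈ M, T x ∈ M) (j : ℕ)
    (x : M) :
    ((clmRestrict T M h ^ j) x : X) = (T ^ j) x := by
  induction j with
  | zero => rfl
  | succ j ih => rw [pow_succ', mul_apply_eq_comp, pow_succ', mul_apply_eq_comp, ← ih]; rfl

theorem ker_clmRestrict {M : Submodule ℂ X} (h : ∀ x ∈ M, T x ∈ M) :
    (clmRestrict T M h).ker = T.ker.comap M.subtype :=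
  LinearMap.ker_restrict h

theorem range_clmRestrict_range_pow (n : ℕ) :
    (clmRestrict T (T ^ n).range (range_pow_invariant T n)).range =
      (T ^ (n + 1)).range.comap (T ^ n).range.subtype := by
  show ((T : X →ₗ[ℂ] X).restrict (range_pow_invariant T n)).range = _
  rw [LinearMap.range_restrict, ← LinearMap.range_comp, pow_succ']
  rfl

theorem isBFredholm_of_isClosed_range_pow (n : ℕ) (hn : IsClosed ((T ^ n).range : Set X))
    (hn₁ : IsClosed ((T ^ (n + 1)).range : Set X))
    [FiniteDimensional ℂ ↥(T.ker ⊓ (T ^ n).range)]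
    {W : Submodule ℂ X} [FiniteDimensional ℂ W]
    (hW : (T ^ n).range ≤ (T ^ (n + 1)).range ⊔ W) : IsBFredholm T := by
  refine ⟨n, hn, ?_, ?_, ?_⟩
  · rw [range_clmRestrict_range_pow]
    exact hn₁.preimage continuous_subtype_val
  · rw [ker_clmRestrict]
    have : FiniteDimensional ℂ ↥((T ^ n).range ⊓ T.ker) := by rwa [inf_comm]
    exact Submodule.finiteDimensional_comap_subtype
  · rw [range_clmRestrict_range_pow]
    exact Submodule.finiteDimensional_quotient_comap_subtype hW

end Restriction

section FiniteRankQuotient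

variable {X : Type*} [NormedAddCommGroup X] [NormedSpace ℂ X] {T : X →L[ℂ] X}

local notation "π" => RingCon.toQuotient (c := TwoSidedIdeal.ringCon (finiteRankIdeal _))

theorem toQuotient_finiteRankIdeal_eq_iff {U V : X →L[ℂ] X} :
    π U = π V ↔ FiniteDimensional ℂ (U - V).range := by
  rw [RingCon.eq, TwoSidedIdeal.rel_iff]
  exact TwoSidedIdeal.mem_mk' _ _ _ _ _ _ _

theorem toQuotient_finiteRankIdeal_surjective :
    Function.Surjective (π : (X →L[ℂ] X) → (finiteRankIdeal X).ringCon.Quotient) :=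
  RingCon.mk'_surjective _

theorem IsFredholmOp.isFredholm [CompleteSpace X] {S : X →L[ℂ] X} (hS : IsFredholmOp S) :
    S.IsFredholm where
  isStrictMap := S.isStrictMap_of_isClosed_range_s8 hS.1
  isClosed_range := hS.1
  finite_ker := hS.2.1
  finite_coker := hS.2.2
  closedComplemented_ker := have := hS.2.1; .of_finiteDimensional _

theorem IsFredholmOp.isUnit_toQuotient [CompleteSpace X] {S : X →L[ℂ] X} (hS : IsFredholmOp S) :
    IsUnit (π S) := by
  obtain ⟨v, hvS, hSv⟩ := hS.isFredholm.exists_isQuasiInverse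
  refine ⟨⟨π S, π v, ?_, ?_⟩, rfl⟩ <;>
    rw [← RingCon.coe_mul, ← RingCon.coe_one, toQuotient_finiteRankIdeal_eq_iff,
      ← Submodule.fg_iff_finiteDimensional]
  · exact LinearMap.FiniteRangeSetoid.equiv_iff_hasFiniteRange.mp hSv
  · exact LinearMap.FiniteRangeSetoid.equiv_iff_hasFiniteRange.mp hvS

theorem IsBFredholm.exists_mul_pow_succ_eq_pow_and_pow_succ_mul_eq_pow [CompleteSpace X]
    (hT : IsBFredholm T) :
    ∃ (n : ℕ) (S : X →L[ℂ] X),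
      π S * π T ^ (n + 1) = π T ^ n ∧ π T ^ (n + 1) * π S = π T ^ n := by
  obtain ⟨n, hclosed, hfred⟩ := hT
  set M := (T ^ n).range
  have : CompleteSpace M := hclosed.completeSpace_coe
  set T₀ := clmRestrict T M (range_pow_invariant T n)
  obtain ⟨w, hw⟩ := hfred.isUnit_toQuotient.pow (n + 1)
  obtain ⟨S₀, hS₀⟩ :=
    toQuotient_finiteRankIdeal_surjective (↑w⁻¹ : (finiteRankIdeal M).ringCon.Quotient)
  have hleft : π (S₀ * T₀ ^ (n + 1)) = π 1 := by
    rw [RingCon.coe_mul, RingCon.coe_pow, ← hw, hS₀, w.inv_mul, RingCon.coe_one]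
  have hright : π (T₀ ^ (n + 1) * S₀) = π 1 := by
    rw [RingCon.coe_mul, RingCon.coe_pow, ← hw, hS₀, w.mul_inv, RingCon.coe_one]
  rw [toQuotient_finiteRankIdeal_eq_iff] at hleft hright
  let τ : X →L[ℂ] M := (T ^ n).codRestrict M (LinearMap.mem_range_self _)
  have hτ₁ : ∀ x, ((τ x : M) : X) = (T ^ n) x := fun x ↦ rfl
  have hT₀ : ∀ j (y : M), ((T₀ ^ j) y : X) = (T ^ j) y := coe_clmRestrict_pow_apply T _
  have hτ : ∀ j x, τ ((T ^ j) x) = (T₀ ^ j) (τ x) := by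
    intro j x
    ext
    rw [hT₀, hτ₁, hτ₁, ← mul_apply_eq_comp, ← mul_apply_eq_comp, ← pow_add,
      ← pow_add, add_comm]
  refine ⟨n, M.subtypeL ∘L S₀ ∘L τ, ?_, ?_⟩ <;>
    rw [← RingCon.coe_pow, ← RingCon.coe_pow, ← RingCon.coe_mul,
      toQuotient_finiteRankIdeal_eq_iff]
  · have h : M.subtypeL ∘L S₀ ∘L τ * T ^ (n + 1) - T ^ n =
        M.subtypeL ∘L (S₀ * T₀ ^ (n + 1) - 1) ∘L τ := by
      ext x
      simp only [sub_apply, mul_apply_eq_comp, ContinuousLinearMap.comp_apply, hτ,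
        one_apply_eq_self, Submodule.coe_subtypeL, map_sub, Submodule.subtype_apply, hτ₁]
    rw [h]
    exact finiteDimensional_range_comp_comp _ _ _
  · have h : T ^ (n + 1) * M.subtypeL ∘L S₀ ∘L τ - T ^ n =
        M.subtypeL ∘L (T₀ ^ (n + 1) * S₀ - 1) ∘L τ := by
      ext x
      simp only [sub_apply, mul_apply_eq_comp, ContinuousLinearMap.comp_apply,
        one_apply_eq_self, Submodule.coe_subtypeL, map_sub, Submodule.subtype_apply, hT₀, hτ₁]
    rw [h]
    exact finiteDimensional_range_comp_comp _ _ _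

theorem isBFredholm_of_isDrazinInverse {S : X →L[ℂ] X} {k : ℕ}
    (hb : IsDrazinInverse (π T) (π S) k) : IsBFredholm T := by
  have hclosed (m : ℕ) (hm : k ≤ m) : IsClosed ((T ^ m).range : Set X) := by
    have : FiniteDimensional ℂ (T ^ m * S ^ m * T ^ m - T ^ m).range := by
      rw [← toQuotient_finiteRankIdeal_eq_iff, RingCon.coe_mul, RingCon.coe_mul, RingCon.coe_pow,
        RingCon.coe_pow]
      exact hb.pow_mul_pow_mul_pow hm
    exact isClosed_range_of_finiteDimensional_range_mul_mul_sub (T ^ m) (S ^ m)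
  have : FiniteDimensional ℂ (S * T ^ (k + 1) - T ^ k).range := by
    rw [← toQuotient_finiteRankIdeal_eq_iff, RingCon.coe_mul, RingCon.coe_pow, RingCon.coe_pow]
    exact hb.mul_pow_succ
  have : FiniteDimensional ℂ (T ^ (k + 1) * S - T ^ k).range := by
    rw [← toQuotient_finiteRankIdeal_eq_iff, RingCon.coe_mul, RingCon.coe_pow, RingCon.coe_pow]
    exact hb.pow_succ_mul
  have := finiteDimensional_ker_inf_range_pow T S k
  exact isBFredholm_of_isClosed_range_pow T k (hclosed k le_rfl) (hclosed (k + 1) k.le_succ)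
    (range_pow_le_range_pow_succ_sup T S k)

end FiniteRankQuotient

/-- `T` is B-Fredholm iff `π(T)` is both left and right Drazin invertible in
`C₀(X) = L(X)/F₀(X)`. -/
theorem bFredholm_iff_left_and_right_drazin_in_C0
    (X : Type*) [NormedAddCommGroup X] [NormedSpace ℂ X] [CompleteSpace X]
    (T : X →L[ℂ] X) :
    IsBFredholm T ↔
      IsLeftDrazinInvertible ((finiteRankIdeal X).ringCon.toQuotient T) ∧
        IsRightDrazinInvertible ((finiteRankIdeal X).ringCon.toQuotient T) := by
  rw [isLeftDrazinInvertible_and_isRightDrazinInvertible_iff]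
  constructor
  · intro hT
    obtain ⟨n, S, hST, hTS⟩ := hT.exists_mul_pow_succ_eq_pow_and_pow_succ_mul_eq_pow
    obtain ⟨b, hb⟩ := exists_isDrazinInverse hST hTS
    exact ⟨b, n, hb⟩
  · rintro ⟨b, k, hb⟩
    obtain ⟨S, rfl⟩ := toQuotient_finiteRankIdeal_surjective b
    exact isBFredholm_of_isDrazinInverse hb
end
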